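/- arXiv:2308.16302 — 4 statements merged into one kernel-verified Lean document; each statement's English description precedes it below -/
import Mathlib

section
/- Let N be a prime and let n1, n2 be integers with N ∤ n1 and N ∤ n2. Then Σ_{a mod N, gcd(a,N)=1} S(n1, a; N) · S(n2, a; N) equals φ(N)² + φ(N) − 1 if n1 ≡ n2 (mod N), and equals −φ(N) − 2 otherwise. -/
/-- `e(x/q)`-type additive character: for `x : ZMod q`, `eZMod q x = exp(2πi·x/q)`. -/
noncomputable def eZMod (q : ℕ) (x : ZMod q) : ℂ :=
  Complex.exp (2 * Real.pi * Complex.I * (x.val : ℂ) / (q : ℂ))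

/-- Kloosterman sum `S(m, n; q) = Σ_{d mod q, gcd(d,q)=1} e((m·d + n·d⁻¹)/q)`. -/
noncomputable def kloostermanS (q : ℕ) (m n : ZMod q) : ℂ :=
  ∑ d ∈ (Finset.range q).filter (fun d => Nat.gcd d q = 1),
    eZMod q (m * (d : ZMod q) + n * ((d : ZMod q)⁻¹))

/-- Gauss sum `G_χ(n) = Σ_{a mod q} χ(a) e(a·n/q)`. -/
noncomputable def gaussS (q : ℕ) (χ : DirichletCharacter ℂ q) (n : ZMod q) : ℂ :=
  ∑ a ∈ Finset.range q, χ (a : ZMod q) * eZMod q ((a : ZMod q) * n)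

/-- Ramanujan sum `R(n, q) = Σ_{a mod q, gcd(a,q)=1} e(a·n/q)`. -/
noncomputable def ramanujanS (q : ℕ) (n : ZMod q) : ℂ :=
  ∑ a ∈ (Finset.range q).filter (fun a => Nat.gcd a q = 1), eZMod q ((a : ZMod q) * n)

/-!
Over a finite field `F` of order `q` with a primitive additive character `ψ`, expanding both
Kloosterman sums and summing over `a` first gives the complete character sum
`∑_{a ≠ 0} ψ(a (d₁⁻¹ + d₂⁻¹)) = q·[d₂ = -d₁] - 1`. The diagonal `d₂ = -d₁` contributes
`q ∑_{d ≠ 0} ψ((m₁ - m₂) d) = q (q·[m₁ = m₂] - 1)`, while the `-1` contributes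
`-(∑_{d ≠ 0} ψ(m₁ d)) (∑_{d ≠ 0} ψ(m₂ d)) = -1`, so the sum is `q²·[m₁ = m₂] - q - 1`.
For `F = ZMod N` this is the theorem, since `φ(N) = N - 1`.
-/

open Finset

lemma inv_add_inv_eq_zero_iff {K : Type*} [DivisionRing K] (a b : K) :
    a⁻¹ + b⁻¹ = 0 ↔ b = -a := by
  rw [add_eq_zero_iff_eq_neg', ← inv_neg, inv_inj]

section FiniteField

variable {F R : Type*} [Field F] [Fintype F] [DecidableEq F] [CommRing R]

noncomputable def kloosterman (ψ : AddChar F R) (m n : F) : R :=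
  ∑ d ∈ univ.erase 0, ψ (m * d + n * d⁻¹)

variable {ψ : AddChar F R}

lemma sum_kloosterman_mul_kloosterman_eq_sum (m₁ m₂ : F) :
    ∑ a ∈ univ.erase 0, kloosterman ψ m₁ a * kloosterman ψ m₂ a =
      ∑ d₁ ∈ univ.erase 0, ∑ d₂ ∈ univ.erase 0,
        ψ (m₁ * d₁ + m₂ * d₂) * ∑ a ∈ univ.erase 0, ψ (a * (d₁⁻¹ + d₂⁻¹)) := by
  simp only [kloosterman, sum_mul_sum]
  simp only [mul_sum]
  rw [sum_comm]
  refine sum_congr rfl fun d₁ _ => ?_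
  rw [sum_comm]
  refine sum_congr rfl fun d₂ _ => sum_congr rfl fun a _ => ?_
  rw [← AddChar.map_add_eq_mul, ← AddChar.map_add_eq_mul]
  congr 1
  ring

variable [IsDomain R]

lemma AddChar.sum_erase_zero_mulShift (hψ : ψ.IsPrimitive) (c : F) :
    ∑ x ∈ univ.erase 0, ψ (x * c) = (if c = 0 then (Fintype.card F : R) else 0) - 1 := by
  rw [sum_erase_eq_sub (mem_univ 0), AddChar.sum_mulShift c hψ, zero_mul,
    AddChar.map_zero_eq_one, Nat.cast_ite, Nat.cast_zero]

lemma AddChar.sum_erase_zero_mul_eq_neg_one (hψ : ψ.IsPrimitive) {m : F} (hm : m ≠ 0) :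
    ∑ x ∈ univ.erase 0, ψ (m * x) = -1 := by
  simp_rw [mul_comm m, ψ.sum_erase_zero_mulShift hψ, if_neg hm, zero_sub]

lemma sum_addChar_mul_sum_addChar_inv_add_inv (hψ : ψ.IsPrimitive) {m₂ : F} (hm₂ : m₂ ≠ 0)
    (m₁ : F) {d₁ : F} (hd₁ : d₁ ≠ 0) :
    ∑ d₂ ∈ univ.erase 0, ψ (m₁ * d₁ + m₂ * d₂) * ∑ a ∈ univ.erase 0, ψ (a * (d₁⁻¹ + d₂⁻¹)) =
      Fintype.card F * ψ ((m₁ - m₂) * d₁) + ψ (m₁ * d₁) := by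
  simp_rw [ψ.sum_erase_zero_mulShift hψ, inv_add_inv_eq_zero_iff, mul_sub, mul_ite, mul_zero,
    mul_one, sum_sub_distrib, sum_ite_eq']
  have hmem : -d₁ ∈ univ.erase 0 := mem_erase.mpr ⟨neg_ne_zero.mpr hd₁, mem_univ _⟩
  simp_rw [if_pos hmem, AddChar.map_add_eq_mul, ← mul_sum, ψ.sum_erase_zero_mul_eq_neg_one hψ hm₂,
    ← AddChar.map_add_eq_mul]
  ring_nf

theorem sum_kloosterman_mul_kloosterman (hψ : ψ.IsPrimitive) {m₁ m₂ : F} (hm₁ : m₁ ≠ 0)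
    (hm₂ : m₂ ≠ 0) :
    ∑ a ∈ univ.erase 0, kloosterman ψ m₁ a * kloosterman ψ m₂ a =
      (if m₁ = m₂ then (Fintype.card F : R) ^ 2 else 0) - Fintype.card F - 1 := by
  rw [sum_kloosterman_mul_kloosterman_eq_sum]
  rw [sum_congr rfl fun d₁ hd₁ =>
    sum_addChar_mul_sum_addChar_inv_add_inv hψ hm₂ m₁ (ne_of_mem_erase hd₁)]
  rw [sum_add_distrib, ← mul_sum, ψ.sum_erase_zero_mul_eq_neg_one hψ hm₁]
  simp_rw [mul_comm (m₁ - m₂), ψ.sum_erase_zero_mulShift hψ, sub_eq_zero]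
  split_ifs <;> ring

end FiniteField

lemma eZMod_eq_stdAddChar {N : ℕ} [NeZero N] (x : ZMod N) : eZMod N x = ZMod.stdAddChar x := by
  rw [ZMod.stdAddChar_apply, ZMod.toCircle_apply]
  rfl

lemma sum_range_coprime_eq_sum_isUnit {M : Type*} [AddCommMonoid M] {N : ℕ} [NeZero N]
    (f : ZMod N → M) :
    ∑ a ∈ (range N).filter (fun a => a.gcd N = 1), f a = ∑ x ∈ univ.filter IsUnit, f x := by
  refine sum_nbij' (↑) ZMod.val (fun a ha => ?_) (fun x hx => ?_) (fun a ha => ?_)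
    (fun x _ => ZMod.natCast_zmod_val x) (fun _ _ => rfl)
  · rw [mem_filter, mem_range] at ha
    exact mem_filter.mpr ⟨mem_univ _, (ZMod.isUnit_iff_coprime a N).mpr ha.2⟩
  · rw [mem_filter, ← ZMod.natCast_zmod_val x, ZMod.isUnit_iff_coprime] at hx
    exact mem_filter.mpr ⟨mem_range.mpr (ZMod.val_lt x), hx.2⟩
  · exact ZMod.val_cast_of_lt (mem_range.mp (mem_filter.mp ha).1)

lemma filter_isUnit_univ_eq_erase_zero {G : Type*} [GroupWithZero G] [Fintype G]
    [DecidableEq G] :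
    univ.filter (IsUnit : G → Prop) = univ.erase 0 := by
  simp_rw [isUnit_iff_ne_zero, filter_ne']

lemma kloostermanS_eq_kloosterman {N : ℕ} [Fact N.Prime] (m n : ZMod N) :
    kloostermanS N m n = kloosterman ZMod.stdAddChar m n := by
  rw [kloostermanS, sum_range_coprime_eq_sum_isUnit (fun d => eZMod N (m * d + n * d⁻¹)),
    filter_isUnit_univ_eq_erase_zero]
  simp_rw [eZMod_eq_stdAddChar]
  rfl

/-- For `N` prime and `n1, n2` not divisible by `N`,
`Σ_{a mod N, gcd(a,N)=1} S(n1,a;N)·S(n2,a;N)` equals `φ(N)² + φ(N) − 1` if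
`n1 ≡ n2 (mod N)`, and `−φ(N) − 2` otherwise. -/
theorem stmt1 (N : ℕ) (hN : N.Prime) (n1 n2 : ℤ)
    (h1 : ¬ (N : ℤ) ∣ n1) (h2 : ¬ (N : ℤ) ∣ n2) :
    ∑ a ∈ (Finset.range N).filter (fun a => Nat.gcd a N = 1),
        kloostermanS N (n1 : ZMod N) ((a : ℕ) : ZMod N) *
          kloostermanS N (n2 : ZMod N) ((a : ℕ) : ZMod N) =
      if (N : ℤ) ∣ n1 - n2 then (N.totient : ℂ) ^ 2 + (N.totient : ℂ) - 1
      else -(N.totient : ℂ) - 2 := by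
  have : Fact N.Prime := ⟨hN⟩
  have hm₁ : (n1 : ZMod N) ≠ 0 := mt (ZMod.intCast_zmod_eq_zero_iff_dvd n1 N).mp h1
  have hm₂ : (n2 : ZMod N) ≠ 0 := mt (ZMod.intCast_zmod_eq_zero_iff_dvd n2 N).mp h2
  have hcongr : (n1 : ZMod N) = n2 ↔ (N : ℤ) ∣ n1 - n2 := by
    rw [eq_comm, ZMod.intCast_eq_intCast_iff_dvd_sub]
  rw [sum_range_coprime_eq_sum_isUnit (fun a => kloostermanS N n1 a * kloostermanS N n2 a),
    filter_isUnit_univ_eq_erase_zero]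
  simp_rw [kloostermanS_eq_kloosterman]
  rw [sum_kloosterman_mul_kloosterman (ZMod.isPrimitive_stdAddChar N) hm₁ hm₂, ZMod.card,
    Nat.totient_prime hN, Nat.cast_sub hN.one_le, Nat.cast_one]
  simp_rw [hcongr]
  split_ifs <;> ring
end

section
/- Let N be a prime, n1, n2 integers, and χ a Dirichlet character modulo N. Then Σ_{u1 mod N, gcd(u1,N)=1} Σ_{u2 mod N, gcd(u2,N)=1} e((n1·u1⁻¹ + n2·u2⁻¹)/N) · conj(χ)(u1 + u2) = Σ_{u mod N, gcd(u,N)=1} conj(χ)(u+1) · G_χ(n1·u⁻¹ + n2), where u⁻¹ denotes the inverse modulo N. -/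
/-!
Substituting `u₁ = u u₂` turns the phase into `(n₁ u⁻¹ + n₂) u₂⁻¹` and the character factor into
`χ̄(u + 1) χ̄(u₂)`. Since `χ̄(u₂) = χ(u₂⁻¹)` on units and `χ` vanishes off the units, the sum over
`u₂` is then the Gauss sum `G_χ(n₁ u⁻¹ + n₂)`.
-/

open Finset

lemma MulChar.conj_apply_unit {R : Type*} [CommRing R] [Finite Rˣ] (χ : MulChar R ℂ) (u : Rˣ) :
    starRingEnd ℂ (χ u) = χ ↑u⁻¹ := by
  rw [← Ring.inverse_unit, ← MulChar.inv_apply]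
  exact MulChar.star_apply' χ u

lemma ZMod.sum_filter_coprime_range_eq_sum_units {N : ℕ} [NeZero N] {M : Type*}
    [AddCommMonoid M] (f : ℕ → M) :
    ∑ u ∈ (range N).filter (fun u => Nat.gcd u N = 1), f u =
      ∑ x : (ZMod N)ˣ, f (x : ZMod N).val := by
  refine sum_bij' (fun u hu => ZMod.unitOfCoprime u (mem_filter.mp hu).2)
    (fun x _ => (x : ZMod N).val) (fun _ _ => mem_univ _) (fun x _ => ?_) (fun u hu => ?_)
    (fun x _ => ?_) (fun u hu => ?_)
  · exact mem_filter.mpr ⟨mem_range.mpr (ZMod.val_lt _), ZMod.val_coe_unit_coprime x⟩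
  · rw [ZMod.coe_unitOfCoprime]
    exact ZMod.val_natCast_of_lt (mem_range.mp (mem_filter.mp hu).1)
  · ext
    simp
  · rw [ZMod.coe_unitOfCoprime, ZMod.val_natCast_of_lt (mem_range.mp (mem_filter.mp hu).1)]

lemma gaussS_eq_sum_units {N : ℕ} [NeZero N] (χ : DirichletCharacter ℂ N) (m : ZMod N) :
    gaussS N χ m = ∑ x : (ZMod N)ˣ, χ x * eZMod N (x * m) := by
  have hsupport : ∀ a ∈ range N, χ a * eZMod N (a * m) ≠ 0 → Nat.gcd a N = 1 := by
    intro a _ h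
    by_contra ha
    exact h (by rw [χ.map_nonunit (by rwa [ZMod.isUnit_iff_coprime]), zero_mul])
  rw [gaussS, ← sum_filter_of_ne hsupport,
    ZMod.sum_filter_coprime_range_eq_sum_units]
  simp only [ZMod.natCast_zmod_val]

lemma sum_units_conj_mul_eZMod_inv {N : ℕ} [NeZero N] (χ : DirichletCharacter ℂ N)
    (m : ZMod N) :
    ∑ y : (ZMod N)ˣ, starRingEnd ℂ (χ y) * eZMod N (m * (y : ZMod N)⁻¹) = gaussS N χ m := by
  rw [gaussS_eq_sum_units]
  refine sum_equiv (Equiv.inv _) (by simp) fun y _ => ?_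
  rw [Equiv.inv_apply, MulChar.conj_apply_unit, ZMod.inv_coe_unit, mul_comm m]

lemma sum_units_sum_units_eZMod_mul_conj {N : ℕ} [NeZero N] (χ : DirichletCharacter ℂ N)
    (a b : ZMod N) :
    ∑ x₁ : (ZMod N)ˣ, ∑ x₂ : (ZMod N)ˣ,
        eZMod N (a * (x₁ : ZMod N)⁻¹ + b * (x₂ : ZMod N)⁻¹) * starRingEnd ℂ (χ (x₁ + x₂)) =
      ∑ x : (ZMod N)ˣ, starRingEnd ℂ (χ (x + 1)) * gaussS N χ (a * (x : ZMod N)⁻¹ + b) := by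
  have hsubst : ∀ x x₂ : (ZMod N)ˣ,
      eZMod N (a * ((x * x₂ : (ZMod N)ˣ) : ZMod N)⁻¹ + b * (x₂ : ZMod N)⁻¹) *
          starRingEnd ℂ (χ ((x * x₂ : (ZMod N)ˣ) + x₂)) =
        starRingEnd ℂ (χ (x + 1)) *
          (starRingEnd ℂ (χ x₂) * eZMod N ((a * (x : ZMod N)⁻¹ + b) * (x₂ : ZMod N)⁻¹)) := by
    intro x x₂
    simp only [ZMod.inv_coe_unit, mul_inv]
    simp only [Units.val_mul]
    rw [show (x * x₂ + x₂ : ZMod N) = (x + 1) * x₂ by ring, map_mul, map_mul]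
    ring_nf
  calc _ = ∑ x₂ : (ZMod N)ˣ, ∑ x : (ZMod N)ˣ, starRingEnd ℂ (χ (x + 1)) *
          (starRingEnd ℂ (χ x₂) * eZMod N ((a * (x : ZMod N)⁻¹ + b) * (x₂ : ZMod N)⁻¹)) := by
        rw [sum_comm]
        refine sum_congr rfl fun x₂ _ => ?_
        rw [← Equiv.sum_comp (Equiv.mulRight x₂)]
        exact sum_congr rfl fun x _ => hsubst x x₂
    _ = _ := by
        rw [sum_comm]
        simp only [← mul_sum, sum_units_conj_mul_eZMod_inv]

theorem stmt4_general (N : ℕ) (n1 n2 : ℤ) (χ : DirichletCharacter ℂ N) :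
    ∑ u1 ∈ (Finset.range N).filter (fun u => Nat.gcd u N = 1),
      ∑ u2 ∈ (Finset.range N).filter (fun u => Nat.gcd u N = 1),
        eZMod N ((n1 : ZMod N) * (((u1 : ℕ) : ZMod N))⁻¹ +
            (n2 : ZMod N) * (((u2 : ℕ) : ZMod N))⁻¹) *
          (starRingEnd ℂ) (χ (((u1 : ℕ) : ZMod N) + ((u2 : ℕ) : ZMod N))) =
      ∑ u ∈ (Finset.range N).filter (fun u => Nat.gcd u N = 1),
        (starRingEnd ℂ) (χ (((u : ℕ) : ZMod N) + 1)) *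
          gaussS N χ ((n1 : ZMod N) * (((u : ℕ) : ZMod N))⁻¹ + (n2 : ZMod N)) := by
  rcases N.eq_zero_or_pos with rfl | hN
  · simp
  have : NeZero N := ⟨hN.ne'⟩
  simp only [ZMod.sum_filter_coprime_range_eq_sum_units, ZMod.natCast_zmod_val]
  exact sum_units_sum_units_eZMod_mul_conj χ _ _

/-- For `N` prime, integers `n1, n2` and a Dirichlet character `χ` mod `N`:
`Σ_{u1,u2 mod N, coprime to N} e((n1 u1⁻¹ + n2 u2⁻¹)/N) conj(χ)(u1+u2)
  = Σ_{u mod N, (u,N)=1} conj(χ)(u+1) G_χ(n1 u⁻¹ + n2)`. -/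
theorem stmt4 (N : ℕ) (hN : N.Prime) (n1 n2 : ℤ) (χ : DirichletCharacter ℂ N) :
    ∑ u1 ∈ (Finset.range N).filter (fun u => Nat.gcd u N = 1),
      ∑ u2 ∈ (Finset.range N).filter (fun u => Nat.gcd u N = 1),
        eZMod N ((n1 : ZMod N) * (((u1 : ℕ) : ZMod N))⁻¹ +
            (n2 : ZMod N) * (((u2 : ℕ) : ZMod N))⁻¹) *
          (starRingEnd ℂ) (χ (((u1 : ℕ) : ZMod N) + ((u2 : ℕ) : ZMod N))) =
      ∑ u ∈ (Finset.range N).filter (fun u => Nat.gcd u N = 1),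
        (starRingEnd ℂ) (χ (((u : ℕ) : ZMod N) + 1)) *
          gaussS N χ ((n1 : ZMod N) * (((u : ℕ) : ZMod N))⁻¹ + (n2 : ZMod N)) :=
  stmt4_general N n1 n2 χ
end

section
/- For every prime p, every integer α ≥ 2, and all integers n1, n2, one has Σ_{u mod p^{α−1}} R(u·p + n1, p^α) · R(u·p + n2, p^α) = p^α · R(n1 − n2, p^α) if p | n2, and the sum equals 0 if p ∤ n2. Here the sum runs over all residues u modulo p^{α−1}. -/
/-!
Write `R(n) = ∑_{a unit} ψ(a n)` with `ψ` the standard additive character of `ZMod q`,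
`q = M p`. Expanding the product and summing over `u` first, orthogonality of
`u ↦ ψ((a + b) u p)` keeps exactly the pairs with `(a + b) p = 0`, each with weight `M`.
Since `q ∣ M²`, such an `a + b` is nilpotent, so for a unit `a` every such `b` is a unit too, and
these `b` are exactly `t M - a` with `t < p`. The sum over `t` of `ψ(t M n₂)` is `p` or `0`
according as `p ∣ n₂`, and what remains is `R(n₁ - n₂)`.
-/

open Finset ZMod

lemma geom_sum_range_of_pow_eq_one {K : Type*} [DivisionRing K] [DecidableEq K] {N : ℕ} {z : K}
    (hz : z ^ N = 1) :
    ∑ u ∈ range N, z ^ u = if z = 1 then (N : K) else 0 := by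
  split_ifs with h
  · simp [h]
  · rw [geom_sum_eq h, hz, sub_self, zero_div]

section
variable {q M p : ℕ} [NeZero q]

lemma eZMod_eq_stdAddChar_s14 (x : ZMod q) : eZMod q x = stdAddChar x := by
  rw [eZMod, stdAddChar_apply, toCircle_apply]

lemma ramanujanS_eq_sum_isUnit (n : ZMod q) :
    ramanujanS q n = ∑ a with IsUnit a, stdAddChar (a * n) := by
  refine sum_nbij' (fun a => (a : ZMod q)) ZMod.val ?_ ?_ ?_ ?_ ?_
  · intro a ha
    simp_all [isUnit_iff_coprime, Nat.coprime_iff_gcd_eq_one]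
  · intro a ha
    simp_all [val_lt, ← isUnit_iff_coprime]
  · intro a ha
    simp_all [Nat.mod_eq_of_lt]
  · exact fun a _ => natCast_zmod_val a
  · exact fun a _ => eZMod_eq_stdAddChar_s14 _

lemma sum_range_stdAddChar_mul_natCast (x : ZMod q) {N k : ℕ} (h : q ∣ N * k) :
    ∑ u ∈ range N, stdAddChar (x * ((u * k : ℕ) : ZMod q)) =
      if x * (k : ZMod q) = 0 then (N : ℂ) else 0 := by
  have hpow (u : ℕ) :
      stdAddChar (x * ((u * k : ℕ) : ZMod q)) = stdAddChar (x * (k : ZMod q)) ^ u := by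
    rw [← AddChar.map_nsmul_eq_pow, nsmul_eq_mul]; push_cast; ring_nf
  have hN : stdAddChar (x * (k : ZMod q)) ^ N = 1 := by
    rw [← hpow, (natCast_eq_zero_iff _ _).mpr h, mul_zero, AddChar.map_zero_eq_one]
  simp_rw [hpow, geom_sum_range_of_pow_eq_one hN]
  refine if_congr ?_ rfl rfl
  rw [← AddChar.map_zero_eq_one (stdAddChar (N := q)), injective_stdAddChar.eq_iff]

lemma filter_mul_natCast_eq_zero (hMp : M * p = q) :
    ({x : ZMod q | x * p = 0} : Finset (ZMod q)) =
      (range p).image (fun t => ((t * M : ℕ) : ZMod q)) := by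
  have hq : 0 < q := Nat.pos_of_ne_zero (NeZero.ne q)
  ext x
  simp only [mem_filter, mem_univ, true_and, mem_image, mem_range]
  constructor
  · intro hx
    have hdvd : M * p ∣ x.val * p := by
      rw [hMp, ← natCast_eq_zero_iff]; push_cast; simpa using hx
    obtain ⟨t, ht⟩ := Nat.dvd_of_mul_dvd_mul_right (Nat.pos_of_mul_pos_left (hMp ▸ hq)) hdvd
    refine ⟨t, Nat.lt_of_mul_lt_mul_left (a := M) ?_, ?_⟩
    · rw [← ht, hMp]; exact val_lt x
    · rw [mul_comm, ← ht, natCast_zmod_val]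
  · rintro ⟨t, -, rfl⟩
    rw [← Nat.cast_mul, natCast_eq_zero_iff, ← hMp, mul_assoc]
    exact dvd_mul_left _ _

lemma sum_filter_mul_natCast_eq_zero {β : Type*} [AddCommMonoid β] (hMp : M * p = q)
    (f : ZMod q → β) :
    ∑ x : ZMod q with x * (p : ZMod q) = 0, f x =
      ∑ t ∈ range p, f ((t * M : ℕ) : ZMod q) := by
  rw [filter_mul_natCast_eq_zero hMp, sum_image]
  intro s hs t ht hst
  have hM : 0 < M := Nat.pos_of_mul_pos_right (hMp ▸ Nat.pos_of_ne_zero (NeZero.ne q))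
  have hlt {r : ℕ} (hr : r ∈ range p) : r * M < q := by
    rw [← hMp, mul_comm M]; exact Nat.mul_lt_mul_of_pos_right (mem_range.mp hr) hM
  rw [natCast_eq_natCast_iff', Nat.mod_eq_of_lt (hlt hs), Nat.mod_eq_of_lt (hlt ht)] at hst
  exact Nat.eq_of_mul_eq_mul_right hM hst

lemma isNilpotent_of_mul_natCast_eq_zero (hMp : M * p = q) (hM : q ∣ M * M) {x : ZMod q}
    (hx : x * p = 0) : IsNilpotent x := by
  have hx' : x ∈ ({x : ZMod q | x * p = 0} : Finset (ZMod q)) := by simpa using hx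
  rw [filter_mul_natCast_eq_zero hMp] at hx'
  obtain ⟨t, -, rfl⟩ := mem_image.mp hx'
  refine ⟨2, ?_⟩
  rw [← Nat.cast_pow, natCast_eq_zero_iff]
  exact hM.trans ⟨t * t, by ring⟩

lemma isUnit_of_add_mul_natCast_eq_zero (hMp : M * p = q) (hM : q ∣ M * M) {a b : ZMod q}
    (ha : IsUnit a) (hab : (a + b) * p = 0) : IsUnit b := by
  simpa using (isNilpotent_of_mul_natCast_eq_zero hMp hM hab).isUnit_add_left_of_commute ha.neg
    (Commute.all _ _)

lemma sum_isUnit_ite_add_mul_natCast_eq_zero {β : Type*} [AddCommMonoid β] (hMp : M * p = q)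
    (hM : q ∣ M * M) {a : ZMod q} (ha : IsUnit a) (f : ZMod q → β) :
    ∑ b with IsUnit b, (if (a + b) * p = 0 then f b else 0) =
      ∑ t ∈ range p, f ((t * M : ℕ) - a) := by
  rw [sum_filter_of_ne fun b _ hb => isUnit_of_add_mul_natCast_eq_zero hMp hM ha (of_not_not
    fun h => hb (if_neg h)), ← sum_filter_mul_natCast_eq_zero hMp (fun x => f (x - a)),
    sum_filter]
  exact Fintype.sum_equiv (Equiv.addLeft a) _ _ fun b => by simp

theorem sum_ramanujanS_add_mul_ramanujanS_add (hMp : M * p = q) (hM : q ∣ M * M)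
    (n₁ n₂ : ZMod q) :
    ∑ u ∈ range M, ramanujanS q ((u * p : ℕ) + n₁) * ramanujanS q ((u * p : ℕ) + n₂) =
      M * (if n₂ * M = 0 then (p : ℂ) else 0) * ramanujanS q (n₁ - n₂) := by
  have hsplit (a b c : ZMod q) : stdAddChar (a * (c + n₁)) * stdAddChar (b * (c + n₂)) =
      stdAddChar (a * n₁ + b * n₂) * stdAddChar ((a + b) * c) := by
    rw [← AddChar.map_add_eq_mul, ← AddChar.map_add_eq_mul]; ring_nf
  have hinner (a : ZMod q) (ha : IsUnit a) :
      ∑ b with IsUnit b, ∑ u ∈ range M,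
        stdAddChar (a * n₁ + b * n₂) * stdAddChar ((a + b) * ((u * p : ℕ) : ZMod q)) =
      M * (if n₂ * M = 0 then (p : ℂ) else 0) * stdAddChar (a * (n₁ - n₂)) := by
    simp_rw [← mul_sum, sum_range_stdAddChar_mul_natCast _ hMp.symm.dvd, mul_ite, mul_zero]
    rw [sum_isUnit_ite_add_mul_natCast_eq_zero hMp hM ha]
    have hshift (t : ℕ) : stdAddChar (a * n₁ + (((t * M : ℕ) : ZMod q) - a) * n₂) =
        stdAddChar (a * (n₁ - n₂)) * stdAddChar (n₂ * ((t * M : ℕ) : ZMod q)) := by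
      rw [← AddChar.map_add_eq_mul]; ring_nf
    simp_rw [hshift, mul_assoc, ← mul_sum, ← sum_mul,
      sum_range_stdAddChar_mul_natCast _ (hMp ▸ mul_comm p M).symm.dvd]
    split_ifs <;> ring
  simp_rw [ramanujanS_eq_sum_isUnit, sum_mul_sum, hsplit]
  rw [sum_comm, mul_sum]
  exact sum_congr rfl fun a ha => by rw [sum_comm, hinner a (mem_filter.mp ha).2]

end

lemma intCast_mul_natCast_eq_zero_iff {q M p : ℕ} (hMp : M * p = q) (hM : M ≠ 0) (n : ℤ) :
    (n : ZMod q) * M = 0 ↔ (p : ℤ) ∣ n := by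
  rw [← Int.cast_natCast, ← Int.cast_mul, intCast_zmod_eq_zero_iff_dvd, ← hMp, Nat.cast_mul,
    mul_comm (M : ℤ), mul_dvd_mul_iff_right (by exact_mod_cast hM)]

/-- For a prime `p`, `α ≥ 2` and integers `n1, n2`:
`Σ_{u mod p^{α−1}} R(u·p + n1, p^α) R(u·p + n2, p^α)` equals `p^α·R(n1 − n2, p^α)`
if `p ∣ n2`, and equals `0` if `p ∤ n2`. -/
theorem stmt14 (p : ℕ) (hp : p.Prime) (α : ℕ) (hα : 2 ≤ α) (n1 n2 : ℤ) :
    ∑ u ∈ Finset.range (p ^ (α - 1)),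
        ramanujanS (p ^ α) (((u * p : ℕ) : ZMod (p ^ α)) + (n1 : ZMod (p ^ α))) *
          ramanujanS (p ^ α) (((u * p : ℕ) : ZMod (p ^ α)) + (n2 : ZMod (p ^ α))) =
      if (p : ℤ) ∣ n2 then ((p : ℂ) ^ α) * ramanujanS (p ^ α) ((n1 - n2 : ℤ) : ZMod (p ^ α))
      else 0 := by
  have : NeZero (p ^ α) := ⟨pow_ne_zero _ hp.ne_zero⟩
  have hMp : p ^ (α - 1) * p = p ^ α := by rw [← pow_succ, Nat.sub_add_cancel (by omega)]
  have hM : p ^ α ∣ p ^ (α - 1) * p ^ (α - 1) := by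
    rw [← pow_add]; exact pow_dvd_pow p (by omega)
  rw [sum_ramanujanS_add_mul_ramanujanS_add hMp hM, Int.cast_sub]
  simp only [intCast_mul_natCast_eq_zero_iff hMp (pow_ne_zero _ hp.ne_zero)]
  split_ifs
  · rw [← Nat.cast_mul, hMp, Nat.cast_pow]
  · simp
end

section
/- For each prime p set f(p) := 1 + ((p³ − p²)/(p³ − 1)) · ((p² + 1)/p²) · (1/(p² − 1)). Then ζ(3)^{−1} · (Π_{q prime} f(q)) · Σ_{d1 ≥ 1} Σ_{d2 ≥ 1} (μ(d1·d2)/(d1²·d2²)) · Π_{p | d1·d2} [ ((p³ − p²)/(p³ − 1)) · (1/(1 − p^{−2})) · f(p)^{−1} ] = 6/π², where μ is the Möbius function, ζ is the Riemann zeta function, the double series converges absolutely, and the infinite product over primes converges. -/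
/-- `f(p) = 1 + ((p³ − p²)/(p³ − 1)) · ((p² + 1)/p²) · (1/(p² − 1))`. -/
noncomputable def fFactor (p : ℕ) : ℝ :=
  1 + (((p : ℝ) ^ 3 - (p : ℝ) ^ 2) / ((p : ℝ) ^ 3 - 1)) *
        (((p : ℝ) ^ 2 + 1) / (p : ℝ) ^ 2) * (1 / ((p : ℝ) ^ 2 - 1))

/-- `ζ(3) = Σ_{n ≥ 1} n⁻³`. -/
noncomputable def zetaThree : ℝ := ∑' n : ℕ+, 1 / ((n : ℕ) : ℝ) ^ 3

/-- The general term
`μ(d1·d2)/(d1²·d2²) · Π_{p | d1·d2} [((p³ − p²)/(p³ − 1)) · (1/(1 − p⁻²)) · f(p)⁻¹]`. -/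
noncomputable def doubleTerm (d1 d2 : ℕ) : ℝ :=
  ((ArithmeticFunction.moebius (d1 * d2) : ℤ) : ℝ) / ((d1 : ℝ) ^ 2 * (d2 : ℝ) ^ 2) *
    ∏ p ∈ (d1 * d2).primeFactors,
      (((p : ℝ) ^ 3 - (p : ℝ) ^ 2) / ((p : ℝ) ^ 3 - 1)) *
        (1 / (1 - ((p : ℝ) ^ 2)⁻¹)) * (fFactor p)⁻¹

/-
Let `g(p)` be the bracketed factor of the statement. The summand is `F(d₁d₂)` for the
multiplicative function `F(n) = μ(n) n⁻² ∏_{p ∣ n} g(p)`, and since `n` has `σ₀(n)` factorisations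
`n = d₁d₂`, the double series is `∑ₙ σ₀(n) F(n)`, with Euler factor `1 - 2g(p)/p²` at `p`.
An explicit computation gives `f(p) (1 - 2g(p)/p²) = (1 - p⁻²)/(1 - p⁻³)`, so the product of `∏ f(p)`
with the double series is the Euler product of `ζ(3)/ζ(2)`, and `ζ(2) = π²/6`.
-/

open ArithmeticFunction Finset
open scoped ArithmeticFunction.Moebius ArithmeticFunction.sigma

noncomputable def primeWeight (p : ℕ) : ℝ :=
  (((p : ℝ) ^ 3 - (p : ℝ) ^ 2) / ((p : ℝ) ^ 3 - 1)) * (1 / (1 - ((p : ℝ) ^ 2)⁻¹)) *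
    (fFactor p)⁻¹

section LocalFactors

variable {p : ℕ}

lemma fFactor_eq (hp : 2 ≤ p) :
    fFactor p = p * (p ^ 3 + p ^ 2 + p - 1) / (((p : ℝ) ^ 3 - 1) * (p + 1)) := by
  have hx : (2 : ℝ) ≤ p := by exact_mod_cast hp
  have h1 : (p : ℝ) ^ 2 - 1 ≠ 0 := by nlinarith
  have h2 : (p : ℝ) ^ 3 - 1 ≠ 0 := by nlinarith [sq_nonneg (p : ℝ)]
  rw [fFactor, eq_div_iff (by positivity)]
  field_simp
  ring

lemma primeWeight_eq (hp : 2 ≤ p) :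
    primeWeight p = (p : ℝ) ^ 3 / ((p : ℝ) ^ 3 + (p : ℝ) ^ 2 + p - 1) := by
  have hx : (2 : ℝ) ≤ p := by exact_mod_cast hp
  have h1 : (p : ℝ) ^ 2 - 1 ≠ 0 := by nlinarith
  have h2 : (p : ℝ) ^ 3 - 1 ≠ 0 := by nlinarith [sq_nonneg (p : ℝ)]
  have h3 : (p : ℝ) ^ 3 + (p : ℝ) ^ 2 + p - 1 ≠ 0 := by nlinarith
  rw [primeWeight, fFactor_eq hp, show 1 - ((p : ℝ) ^ 2)⁻¹ = (p ^ 2 - 1) / p ^ 2 by field_simp]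
  field_simp
  ring

lemma primeWeight_nonneg (hp : 2 ≤ p) : 0 ≤ primeWeight p := by
  have hx : (2 : ℝ) ≤ p := by exact_mod_cast hp
  rw [primeWeight_eq hp]
  exact div_nonneg (by positivity) (by nlinarith)

lemma primeWeight_le_one (hp : 2 ≤ p) : primeWeight p ≤ 1 := by
  have hx : (2 : ℝ) ≤ p := by exact_mod_cast hp
  rw [primeWeight_eq hp, div_le_one (by nlinarith)]
  nlinarith

lemma fFactor_sub_one_eq (hp : 2 ≤ p) :
    fFactor p - 1 = ((p : ℝ) ^ 2 + 1) / (((p : ℝ) ^ 3 - 1) * (p + 1)) := by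
  have hx : (2 : ℝ) ≤ p := by exact_mod_cast hp
  have h3 : (0 : ℝ) < p ^ 3 - 1 := by nlinarith [sq_nonneg (p : ℝ)]
  rw [fFactor_eq hp, sub_eq_iff_eq_add, div_add_one (by positivity)]
  ring_nf

lemma fFactor_sub_one_nonneg (hp : 2 ≤ p) : 0 ≤ fFactor p - 1 := by
  have hx : (2 : ℝ) ≤ p := by exact_mod_cast hp
  have h3 : (0 : ℝ) < p ^ 3 - 1 := by nlinarith [sq_nonneg (p : ℝ)]
  rw [fFactor_sub_one_eq hp]
  positivity

lemma fFactor_sub_one_le (hp : 2 ≤ p) : fFactor p - 1 ≤ 2 * ((p : ℝ) ^ 2)⁻¹ := by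
  have hx : (2 : ℝ) ≤ p := by exact_mod_cast hp
  have h3 : (0 : ℝ) < p ^ 3 - 1 := by nlinarith [sq_nonneg (p : ℝ)]
  rw [fFactor_sub_one_eq hp, ← div_eq_mul_inv, div_le_div_iff₀ (by positivity) (by positivity)]
  nlinarith

lemma fFactor_mul_one_sub_primeWeight (hp : 2 ≤ p) :
    fFactor p * (1 - 2 * primeWeight p / (p : ℝ) ^ 2) =
      (1 - ((p : ℝ) ^ 2)⁻¹) * (1 - ((p : ℝ) ^ 3)⁻¹)⁻¹ := by
  have hx : (2 : ℝ) ≤ p := by exact_mod_cast hp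
  have h2 : (p : ℝ) ^ 3 - 1 ≠ 0 := by nlinarith [sq_nonneg (p : ℝ)]
  -- `q` is kept opaque so that `field_simp` recognises it as a nonzero denominator.
  obtain ⟨q, hq, hq0⟩ : ∃ q : ℝ, q = p ^ 3 + p ^ 2 + p - 1 ∧ q ≠ 0 := ⟨_, rfl, by nlinarith⟩
  rw [fFactor_eq hp, primeWeight_eq hp, ← hq,
    show 1 - ((p : ℝ) ^ 3)⁻¹ = (p ^ 3 - 1) / p ^ 3 by field_simp]
  field_simp
  rw [hq]
  ring

end LocalFactors

noncomputable def weightedMoebius : ArithmeticFunction ℝ :=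
  ((μ : ArithmeticFunction ℝ).pmul (prodPrimeFactors primeWeight)).pdiv
    (pow 2 : ArithmeticFunction ℝ)

lemma isMultiplicative_weightedMoebius : weightedMoebius.IsMultiplicative :=
  (isMultiplicative_moebius.intCast.pmul (IsMultiplicative.prodPrimeFactors _)).pdiv
    isMultiplicative_pow.natCast

lemma weightedMoebius_apply {n : ℕ} (hn : n ≠ 0) :
    weightedMoebius n = μ n / (n : ℝ) ^ 2 * ∏ p ∈ n.primeFactors, primeWeight p := by
  rw [weightedMoebius, pdiv_apply, pmul_apply, intCoe_apply, natCoe_apply,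
    prodPrimeFactors_apply hn, pow_apply, if_neg (by simp), Nat.cast_pow, mul_div_right_comm]

lemma doubleTerm_eq_weightedMoebius {d₁ d₂ : ℕ} (h₁ : d₁ ≠ 0) (h₂ : d₂ ≠ 0) :
    doubleTerm d₁ d₂ = weightedMoebius (d₁ * d₂) := by
  rw [weightedMoebius_apply (mul_ne_zero h₁ h₂), doubleTerm, Nat.cast_mul, mul_pow]
  rfl

lemma abs_weightedMoebius_le (n : ℕ) : |weightedMoebius n| ≤ ((n : ℝ) ^ 2)⁻¹ := by
  rcases eq_or_ne n 0 with rfl | hn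
  · simp
  have hw : ∀ p ∈ n.primeFactors, 0 ≤ primeWeight p ∧ primeWeight p ≤ 1 := fun p hp =>
    ⟨primeWeight_nonneg (Nat.prime_of_mem_primeFactors hp).two_le,
      primeWeight_le_one (Nat.prime_of_mem_primeFactors hp).two_le⟩
  rw [weightedMoebius_apply hn, abs_mul, abs_div, abs_pow, Nat.abs_cast,
    abs_of_nonneg (prod_nonneg fun p hp => (hw p hp).1), div_eq_mul_inv]
  calc |(μ n : ℝ)| * ((n : ℝ) ^ 2)⁻¹ * ∏ p ∈ n.primeFactors, primeWeight p
      ≤ 1 * ((n : ℝ) ^ 2)⁻¹ * 1 := by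
        gcongr ?_ * _ * ?_
        · exact prod_nonneg fun p hp => (hw p hp).1
        · exact_mod_cast abs_moebius_le_one
        · exact prod_le_one (fun p hp => (hw p hp).1) (fun p hp => (hw p hp).2)
    _ = ((n : ℝ) ^ 2)⁻¹ := by ring

lemma hasSum_sigma_zero_smul {M : Type*} [AddCommGroup M] [TopologicalSpace M]
    [IsTopologicalAddGroup M] [RegularSpace M] {f : ℕ → M} {a : M}
    (h : HasSum (fun d : ℕ+ × ℕ+ => f (d.1 * d.2)) a) :
    HasSum (fun n => σ 0 n • f n) a := by
  rw [← sigmaAntidiagonalEquivProd.hasSum_iff] at h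
  have hpnat : HasSum (fun n : ℕ+ => σ 0 n • f n) a := by
    refine h.sigma fun n => ?_
    have hfiber (x : (n : ℕ).divisorsAntidiagonal) :
        f ((sigmaAntidiagonalEquivProd ⟨n, x⟩).1 * (sigmaAntidiagonalEquivProd ⟨n, x⟩).2) = f n :=
      congrArg f (divisorsAntidiagonalFactors_eq x)
    simpa [hfiber, sigma_zero_apply, ← Nat.map_div_right_divisors] using
      hasSum_fintype fun _ : (n : ℕ).divisorsAntidiagonal => f n
  simpa [hasSum_pnat_iff (f := fun n => σ 0 n • f n)] using hpnat

lemma summable_abs_weightedMoebius_mul :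
    Summable fun d : ℕ+ × ℕ+ => |weightedMoebius (d.1 * d.2)| := by
  have h : Summable fun n : ℕ+ => ((n : ℝ) ^ 2)⁻¹ :=
    (Real.summable_nat_pow_inv.mpr one_lt_two).comp_injective PNat.coe_injective
  refine (h.mul_of_nonneg h (fun _ => by positivity) (fun _ => by positivity)).of_nonneg_of_le
    (fun _ => abs_nonneg _) fun d => (abs_weightedMoebius_le _).trans_eq ?_
  push_cast
  rw [mul_pow, mul_inv]

lemma coe_sigma_zero_pmul_weightedMoebius :
    ⇑((σ 0 : ArithmeticFunction ℝ).pmul weightedMoebius) = fun n => σ 0 n • weightedMoebius n :=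
  funext fun n => by rw [pmul_apply, natCoe_apply, nsmul_eq_mul]

lemma hasSum_sigma_zero_pmul_weightedMoebius :
    HasSum ((σ 0 : ArithmeticFunction ℝ).pmul weightedMoebius)
      (∑' d : ℕ+ × ℕ+, weightedMoebius (d.1 * d.2)) := by
  rw [coe_sigma_zero_pmul_weightedMoebius]
  exact hasSum_sigma_zero_smul summable_abs_weightedMoebius_mul.of_abs.hasSum

lemma summable_norm_sigma_zero_pmul_weightedMoebius :
    Summable fun n => ‖(σ 0 : ArithmeticFunction ℝ).pmul weightedMoebius n‖ := by
  simp only [coe_sigma_zero_pmul_weightedMoebius, Real.norm_eq_abs, abs_nsmul]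
  exact (hasSum_sigma_zero_smul (f := fun n => |weightedMoebius n|)
    summable_abs_weightedMoebius_mul.hasSum).summable

lemma weightedMoebius_prime {p : ℕ} (hp : p.Prime) :
    weightedMoebius p = -primeWeight p / (p : ℝ) ^ 2 := by
  rw [weightedMoebius_apply hp.ne_zero, moebius_apply_prime hp, hp.primeFactors, prod_singleton]
  push_cast
  ring

lemma weightedMoebius_prime_pow {p e : ℕ} (hp : p.Prime) (he : 2 ≤ e) :
    weightedMoebius (p ^ e) = 0 := by
  simp [weightedMoebius_apply (pow_ne_zero e hp.ne_zero),
    moebius_apply_prime_pow hp (by omega : e ≠ 0), show e ≠ 1 by omega]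

lemma tsum_sigma_zero_pmul_weightedMoebius_prime_pow {p : ℕ} (hp : p.Prime) :
    ∑' e, (σ 0 : ArithmeticFunction ℝ).pmul weightedMoebius (p ^ e) =
      1 - 2 * primeWeight p / (p : ℝ) ^ 2 := by
  rw [tsum_eq_sum (s := range 2) fun e he => by
    simp only [coe_sigma_zero_pmul_weightedMoebius,
      weightedMoebius_prime_pow hp (by simpa using he : 1 < e), smul_zero]]
  simp only [sum_range_succ, coe_sigma_zero_pmul_weightedMoebius]
  rw [sigma_zero_apply_prime_pow hp, sigma_zero_apply_prime_pow hp, pow_zero, pow_one,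
    isMultiplicative_weightedMoebius.map_one, weightedMoebius_prime hp]
  ring

lemma hasProd_one_sub_primeWeight :
    HasProd (fun p : Nat.Primes => 1 - 2 * primeWeight p / (p : ℝ) ^ 2)
      (∑' d : ℕ+ × ℕ+, doubleTerm d.1 d.2) := by
  have h := (isMultiplicative_sigma.natCast.pmul
    isMultiplicative_weightedMoebius).eulerProduct_hasProd
      summable_norm_sigma_zero_pmul_weightedMoebius
  have hfactor : (fun p : Nat.Primes => ∑' e, (σ 0 : ArithmeticFunction ℝ).pmul weightedMoebius
      (p ^ e)) = fun p : Nat.Primes => 1 - 2 * primeWeight p / ((p : ℕ) : ℝ) ^ 2 :=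
    funext fun p => tsum_sigma_zero_pmul_weightedMoebius_prime_pow p.prop
  rwa [hfactor, hasSum_sigma_zero_pmul_weightedMoebius.tsum_eq,
    ← tsum_congr fun d : ℕ+ × ℕ+ => doubleTerm_eq_weightedMoebius d.1.ne_zero d.2.ne_zero] at h

lemma multipliable_fFactor : Multipliable fun q : Nat.Primes => fFactor q := by
  have h : Summable fun q : Nat.Primes => fFactor q - 1 :=
    (((Real.summable_nat_pow_inv.mpr one_lt_two).mul_left 2).comp_injective
      Nat.Primes.coe_nat_injective).of_nonneg_of_le
      (fun q => fFactor_sub_one_nonneg q.prop.two_le) (fun q => fFactor_sub_one_le q.prop.two_le)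
  simpa using Real.multipliable_one_add_of_summable h

lemma hasProd_inv_one_sub_inv_pow {k : ℕ} (hk : 1 < k) :
    HasProd (fun p : Nat.Primes => (1 - ((p : ℝ) ^ k)⁻¹)⁻¹) (∑' n : ℕ, ((n : ℝ) ^ k)⁻¹) :=
  EulerProduct.eulerProduct_completely_multiplicative_hasProd
    (f := (invMonoidWithZeroHom.comp (powMonoidWithZeroHom (by omega : k ≠ 0))).comp
      (Nat.castRingHom ℝ).toMonoidWithZeroHom)
    (Real.summable_nat_pow_inv.mpr hk).abs

lemma zetaThree_eq_tsum : zetaThree = ∑' n : ℕ, ((n : ℝ) ^ 3)⁻¹ := by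
  rw [zetaThree, ← tsum_pnat_eq_tsum_of_eq_zero (by simp)]
  simp [one_div]

lemma zetaThree_pos : 0 < zetaThree := by
  rw [zetaThree_eq_tsum]
  exact (Real.summable_nat_pow_inv.mpr (by norm_num)).tsum_pos (fun _ => by positivity) 1
    (by norm_num)

lemma hasProd_one_sub_inv_sq :
    HasProd (fun p : Nat.Primes => 1 - ((p : ℝ) ^ 2)⁻¹) (6 / Real.pi ^ 2) := by
  have hsum : ∑' n : ℕ, ((n : ℝ) ^ 2)⁻¹ = Real.pi ^ 2 / 6 := by
    simpa only [one_div] using hasSum_zeta_two.tsum_eq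
  simpa [hsum] using
    (hasProd_inv_one_sub_inv_pow one_lt_two).inv₀ (by rw [hsum]; positivity)

lemma hasProd_zetaThree :
    HasProd (fun p : Nat.Primes => (1 - ((p : ℝ) ^ 3)⁻¹)⁻¹) zetaThree :=
  zetaThree_eq_tsum ▸ hasProd_inv_one_sub_inv_pow (by norm_num)

/-- `ζ(3)⁻¹ · (Π_q f(q)) · Σ_{d1,d2 ≥ 1} μ(d1 d2)/(d1² d2²) Π_{p | d1 d2}
  [((p³ − p²)/(p³ − 1)) (1 − p⁻²)⁻¹ f(p)⁻¹] = 6/π²`,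
where the double series converges absolutely and the infinite product converges. -/
theorem stmt17 :
    Summable (fun d : ℕ+ × ℕ+ => |doubleTerm d.1 d.2|) ∧
    Multipliable (fun q : Nat.Primes => fFactor (q : ℕ)) ∧
    zetaThree⁻¹ * (∏' q : Nat.Primes, fFactor (q : ℕ)) *
        (∑' d : ℕ+ × ℕ+, doubleTerm d.1 d.2) = 6 / Real.pi ^ 2 := by
  refine ⟨summable_abs_weightedMoebius_mul.congr fun d => by
    rw [doubleTerm_eq_weightedMoebius d.1.ne_zero d.2.ne_zero], multipliable_fFactor, ?_⟩
  have hprod := multipliable_fFactor.hasProd.mul hasProd_one_sub_primeWeight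
  simp only [fun q : Nat.Primes => fFactor_mul_one_sub_primeWeight q.prop.two_le] at hprod
  rw [mul_assoc, hprod.unique (hasProd_one_sub_inv_sq.mul hasProd_zetaThree)]
  field_simp [zetaThree_pos.ne']
end
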